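/- If a Riemann soliton equation 2R + λ g⊙g + g⊙(£_Z g) = 0 holds on a 3-dimensional Riemannian manifold, then contracting over the first and fourth arguments yields the Ricci-soliton-type equation (£_Z g)(F,W) + 2S(F,W) + (4λ + 2 div Z) g(F,W) = 0; in particular, if div Z = 0 the Riemann soliton reduces to a Ricci soliton with constant 2λ. -/
import Mathlib


open scoped RealInnerProductSpace

/-- The Kulkarni–Nomizu product of two bilinear forms (as functions). -/
def KulkarniNomizu {V : Type*} (P Q : V → V → ℝ) (E F Z W : V) : ℝ :=
  P E W * Q F Z + P F Z * Q E W - P E Z * Q F W - P F W * Q E Z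

/-- Pointwise formulation on a 3-dimensional Riemannian manifold: if the Riemann soliton
equation `2R + λ g⊙g + g⊙(£_Z g) = 0` holds, then contracting over the first and fourth
arguments (in an orthonormal frame) yields
`(£_Z g)(F,W) + 2S(F,W) + (4λ + 2 div Z) g(F,W) = 0`; in particular, if `div Z = 0` the
Riemann soliton reduces to a Ricci soliton with constant `2λ`. -/
theorem riemann_soliton_contracts_to_ricci_soliton {V : Type*} [NormedAddCommGroup V]
    [InnerProductSpace ℝ V] (b : OrthonormalBasis (Fin 3) ℝ V)
    (R : V → V → V → V → ℝ) (S L : V → V → ℝ) (lam divZ : ℝ)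
    (hLsymm : ∀ E F, L E F = L F E)
    (hLexp : ∀ F W, ∑ i, ⟪b i, W⟫ * L F (b i) = L F W)
    (hsol : ∀ E F W X, 2 * R E F W X
        + lam * KulkarniNomizu (fun E F => ⟪E, F⟫) (fun E F => ⟪E, F⟫) E F W X
        + KulkarniNomizu (fun E F => ⟪E, F⟫) L E F W X = 0)
    (hRic : ∀ F W, ∑ i, R (b i) F W (b i) = S F W)
    (hdiv : ∑ i, L (b i) (b i) = 2 * divZ) :
    (∀ F W, L F W + 2 * S F W + (4 * lam + 2 * divZ) * ⟪F, W⟫ = 0) ∧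
      (divZ = 0 → ∀ F W, L F W + 2 * S F W + 4 * lam * ⟪F, W⟫ = 0) := by
  have hn : ∀ i : Fin 3, (⟪b i, b i⟫ : ℝ) = 1 := fun i => by
    simp [real_inner_self_eq_norm_sq, b.orthonormal.1 i]
  have main : ∀ F W, L F W + 2 * S F W + (4 * lam + 2 * divZ) * ⟪F, W⟫ = 0 := by
    intro F W
    have h0 := hsol (b 0) F W (b 0)
    have h1 := hsol (b 1) F W (b 1)
    have h2 := hsol (b 2) F W (b 2)
    simp only [KulkarniNomizu] at h0 h1 h2
    have e1 := hRic F W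
    have e2 : ∑ i, ⟪b i, W⟫ * ⟪F, b i⟫ = ⟪F, W⟫ := by
      rw [← b.sum_inner_mul_inner F W]
      exact Finset.sum_congr rfl fun i _ => by rw [mul_comm, real_inner_comm W (b i)]
    have e5 := hLexp F W
    have e6 : ∑ i, ⟪F, b i⟫ * L (b i) W = L F W := by
      rw [hLsymm F W, ← hLexp W F]
      exact Finset.sum_congr rfl fun i _ => by rw [real_inner_comm, hLsymm]
    have hd := hdiv
    rw [Fin.sum_univ_three] at e1 e2 e5 e6 hd
    linear_combination h0 + h1 + h2 - 2 * e1 + 2 * lam * e2 + e5 + e6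
      - ⟪F, W⟫ * hd - (2 * lam * ⟪F, W⟫ + L F W) * (hn 0 + hn 1 + hn 2)
  refine ⟨main, fun h0 F W => ?_⟩
  have := main F W
  rw [h0] at this
  linarith
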